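/- For each positive integer t, let Q_{2t} ∈ ℚ^{2t×2t} be the block matrix Q_{2t} = (1/2)·[[(1 - i·e₁)I_t, (e₂ + i·e₃)I_t], [(-e₂ + i·e₃)I_t, (1 + i·e₁)I_t]]. Then Q_{2t}·Q_{2t} = I_{2t}, and for every A = A₀ + A₁e₁ + A₂e₂ + A₃e₃ ∈ ℚ^{m×n} (with A₀, A₁, A₂, A₃ ∈ ℂ^{m×n}) the universal factorization equality Q_{2m} · diag(A, A) · Q_{2n} = Ψ(A) holds, where the entries of the complex block matrix Ψ(A) = [[A₀ + iA₁, -(A₂ + iA₃)], [A₂ - iA₃, A₀ - iA₁]] are regarded as scalar complex quaternions, and the matrices Q_{2m}, Q_{2n} do not depend on A. -/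

import Mathlib

open Quaternion Matrix Complex

noncomputable section

/-- The basis quaternion e₁ of the complex quaternion algebra. -/
def e1 : ℍ[ℂ] := ⟨0, 1, 0, 0⟩
/-- The basis quaternion e₂. -/
def e2 : ℍ[ℂ] := ⟨0, 0, 1, 0⟩
/-- The basis quaternion e₃. -/
def e3 : ℍ[ℂ] := ⟨0, 0, 0, 1⟩

/-- The complex representation Ψ(A) of a complex quaternion matrix
`A = A₀ + A₁e₁ + A₂e₂ + A₃e₃`, namely `[[A₀ + iA₁, -(A₂ + iA₃)], [A₂ - iA₃, A₀ - iA₁]]`. -/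
def Psi {m n : ℕ} (A : Matrix (Fin m) (Fin n) ℍ[ℂ]) :
    Matrix (Fin m ⊕ Fin m) (Fin n ⊕ Fin n) ℂ :=
  Matrix.fromBlocks
    (Matrix.of fun s t => (A s t).re + (A s t).imI * I)
    (Matrix.of fun s t => -((A s t).imJ + (A s t).imK * I))
    (Matrix.of fun s t => (A s t).imJ - (A s t).imK * I)
    (Matrix.of fun s t => (A s t).re - (A s t).imI * I)

/-- The universal matrix `Q_{2t}`. -/
def Q2 (t : ℕ) : Matrix (Fin t ⊕ Fin t) (Fin t ⊕ Fin t) ℍ[ℂ] :=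
  (2 : ℂ)⁻¹ • Matrix.fromBlocks
    ((1 - I • e1) • (1 : Matrix (Fin t) (Fin t) ℍ[ℂ]))
    ((e2 + I • e3) • (1 : Matrix (Fin t) (Fin t) ℍ[ℂ]))
    ((-e2 + I • e3) • (1 : Matrix (Fin t) (Fin t) ℍ[ℂ]))
    ((1 + I • e1) • (1 : Matrix (Fin t) (Fin t) ℍ[ℂ]))

lemma csmul_mul (c : ℂ) (a b : ℍ[ℂ]) : (c • a) * b = c • (a * b) := by
  ext <;> simp <;> ring

lemma mul_csmul (c : ℂ) (a b : ℍ[ℂ]) : a * (c • b) = c • (a * b) := by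
  ext <;> simp <;> ring

lemma mySmulMul {p q r : Type*} [Fintype q] (c : ℂ) (X : Matrix p q ℍ[ℂ])
    (Y : Matrix q r ℍ[ℂ]) : (c • X) * Y = c • (X * Y) := by
  refine Matrix.ext fun i j => ?_
  simp [Matrix.mul_apply, csmul_mul]
  simp only [← Quaternion.coe_mul_eq_smul, Finset.mul_sum]

lemma myMulSmul {p q r : Type*} [Fintype q] (c : ℂ) (X : Matrix p q ℍ[ℂ])
    (Y : Matrix q r ℍ[ℂ]) : X * (c • Y) = c • (X * Y) := by
  refine Matrix.ext fun i j => ?_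
  simp [Matrix.mul_apply, mul_csmul]
  simp only [← Quaternion.coe_mul_eq_smul, Finset.mul_sum]

lemma smulOneMul {p q : Type*} [Fintype p] [DecidableEq p] (c : ℍ[ℂ])
    (M : Matrix p q ℍ[ℂ]) : (c • (1 : Matrix p p ℍ[ℂ])) * M = M.map (c * ·) := by
  refine Matrix.ext fun i j => ?_
  simp [Matrix.mul_apply, Matrix.one_apply, mul_ite, ite_mul,
    Finset.sum_ite_eq, Finset.sum_ite_eq']

lemma mulSmulOne {p q : Type*} [Fintype q] [DecidableEq q] (c : ℍ[ℂ])
    (M : Matrix p q ℍ[ℂ]) : M * (c • (1 : Matrix q q ℍ[ℂ])) = M.map (· * c) := by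
  refine Matrix.ext fun i j => ?_
  simp [Matrix.mul_apply, Matrix.one_apply, mul_ite, ite_mul,
    Finset.sum_ite_eq, Finset.sum_ite_eq']

@[simp] lemma e1_re : e1.re = 0 := rfl
@[simp] lemma e1_imI : e1.imI = 1 := rfl
@[simp] lemma e1_imJ : e1.imJ = 0 := rfl
@[simp] lemma e1_imK : e1.imK = 0 := rfl
@[simp] lemma e2_re : e2.re = 0 := rfl
@[simp] lemma e2_imI : e2.imI = 0 := rfl
@[simp] lemma e2_imJ : e2.imJ = 1 := rfl
@[simp] lemma e2_imK : e2.imK = 0 := rfl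
@[simp] lemma e3_re : e3.re = 0 := rfl
@[simp] lemma e3_imI : e3.imI = 0 := rfl
@[simp] lemma e3_imJ : e3.imJ = 0 := rfl
@[simp] lemma e3_imK : e3.imK = 1 := rfl

lemma L11 (a : ℍ[ℂ]) :
    (2:ℂ)⁻¹ • (2:ℂ)⁻¹ • ((1 - I • e1) * a * (1 - I • e1) + (e2 + I • e3) * a * (-e2 + I • e3))
      = algebraMap ℂ ℍ[ℂ] (a.re + a.imI * I) := by
  ext <;> simp <;> ring_nf <;> simp [Complex.I_sq] <;> ring

lemma L12 (a : ℍ[ℂ]) :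
    (2:ℂ)⁻¹ • (2:ℂ)⁻¹ • ((1 - I • e1) * a * (e2 + I • e3) + (e2 + I • e3) * a * (1 + I • e1))
      = algebraMap ℂ ℍ[ℂ] (-(a.imJ + a.imK * I)) := by
  ext <;> simp <;> ring_nf <;> simp [Complex.I_sq] <;> ring

lemma L21 (a : ℍ[ℂ]) :
    (2:ℂ)⁻¹ • (2:ℂ)⁻¹ • ((-e2 + I • e3) * a * (1 - I • e1) + (1 + I • e1) * a * (-e2 + I • e3))
      = algebraMap ℂ ℍ[ℂ] (a.imJ - a.imK * I) := by
  ext <;> simp <;> ring_nf <;> simp [Complex.I_sq] <;> ring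

lemma L22 (a : ℍ[ℂ]) :
    (2:ℂ)⁻¹ • (2:ℂ)⁻¹ • ((-e2 + I • e3) * a * (e2 + I • e3) + (1 + I • e1) * a * (1 + I • e1))
      = algebraMap ℂ ℍ[ℂ] (a.re - a.imI * I) := by
  ext <;> simp <;> ring_nf <;> simp [Complex.I_sq] <;> ring

lemma key (m n : ℕ) (A : Matrix (Fin m) (Fin n) ℍ[ℂ]) :
    Q2 m * Matrix.fromBlocks A 0 0 A * Q2 n = (Psi A).map (algebraMap ℂ ℍ[ℂ]) := by
  simp only [Q2, mySmulMul, myMulSmul, Matrix.fromBlocks_multiply, smulOneMul, mulSmulOne,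
    Matrix.mul_zero, Matrix.zero_mul, add_zero, zero_add]
  refine Matrix.ext fun i j => ?_
  rcases i with i | i <;> rcases j with j | j <;>
    simp only [Matrix.smul_apply, Matrix.fromBlocks_apply₁₁, Matrix.fromBlocks_apply₁₂,
      Matrix.fromBlocks_apply₂₁, Matrix.fromBlocks_apply₂₂, Matrix.add_apply,
      Matrix.map_apply, Psi, Matrix.of_apply]
  · exact L11 (A i j)
  · exact L12 (A i j)
  · exact L21 (A i j)
  · exact L22 (A i j)

theorem stmt_10 :
    (∀ t : ℕ, 0 < t → Q2 t * Q2 t = 1) ∧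
      ∀ (m n : ℕ) (A : Matrix (Fin m) (Fin n) ℍ[ℂ]),
        Q2 m * Matrix.fromBlocks A 0 0 A * Q2 n = (Psi A).map (algebraMap ℂ ℍ[ℂ]) := by
  refine ⟨fun t _ => ?_, key⟩
  have h := key t t 1
  rw [Matrix.fromBlocks_one] at h
  rw [show Q2 t * Q2 t = Q2 t * 1 * Q2 t by rw [Matrix.mul_one], h]
  refine Matrix.ext fun i j => ?_
  rcases i with i | i <;> rcases j with j | j <;>
    simp [Psi, Matrix.one_apply, Matrix.map_apply, apply_ite] <;> split_ifs <;> simp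

end
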